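/- Equality case in the data processing inequality via disintegration: Let μ and ν be probability measures on a standard Borel space Ω, f : Ω → E measurable into a standard Borel space E, and suppose μ ≪ ν. If the conditional distributions of μ and ν given f agree f_*μ-almost everywhere (i.e., μ and ν share a common disintegration kernel along f), then KL(f_*μ ‖ f_*ν) = KL(μ ‖ ν). -/

import Mathlib

/-!
Write `g = d(f_*μ)/d(f_*ν)`. Replacing `κμ` by `κν` and `f_*μ` by `(f_*ν).withDensity g` in the
disintegration of `μ`, and using that `κν e` lives on the fibre `f⁻¹{e}`, where `g ∘ f` is the
constant `g e`, gives `μ = ν.withDensity (g ∘ f)`. So `dμ/dν = g ∘ f` `ν`-a.e.: the log-likelihood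
ratio of `μ` and `ν` factors through `f`, and both divergences are the same integral.
-/

open MeasureTheory
open scoped ENNReal NNReal

/- Kullback–Leibler divergence: `∫ log (dμ/dν) dμ` when `μ ≪ ν` (and the
log-likelihood ratio is integrable), `+∞` otherwise. -/
open scoped Classical in
noncomputable def klDiv {Ω : Type*} [MeasurableSpace Ω] (μ ν : Measure Ω) : ℝ≥0∞ :=
  if μ ≪ ν ∧ Integrable (llr μ ν) μ then ENNReal.ofReal (∫ x, llr μ ν x ∂μ) else ⊤

open ProbabilityTheory

namespace MeasureTheory

variable {Ω E : Type*} [MeasurableSpace Ω]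

lemma lintegral_indicator_comp_of_ae_eq {m : Measure Ω} {f : Ω → E} {e : E}
    (hfe : ∀ᵐ ω ∂m, f ω = e) {s : Set Ω} (hs : MeasurableSet s) (g : E → ℝ≥0∞) :
    ∫⁻ ω, s.indicator (g ∘ f) ω ∂m = g e * m s := by
  rw [lintegral_congr_ae (g := s.indicator fun _ ↦ g e), lintegral_indicator_const hs]
  filter_upwards [hfe] with ω hω
  simp only [Set.indicator, Function.comp_apply, hω]

variable [MeasurableSpace E]

theorem bind_withDensity_map_eq_withDensity_comp {ν : Measure Ω} {f : Ω → E}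
    (hf : Measurable f) {κ : Kernel E Ω} (hdis : ν = (ν.map f).bind κ)
    (hconc : ∀ᵐ e ∂(ν.map f), κ e (f ⁻¹' {e})ᶜ = 0) {g : E → ℝ≥0∞} (hg : Measurable g) :
    ((ν.map f).withDensity g).bind κ = ν.withDensity (g ∘ f) := by
  ext s hs
  rw [Measure.bind_apply hs κ.aemeasurable, withDensity_apply _ hs,
    lintegral_withDensity_eq_lintegral_mul _ hg (κ.measurable_coe hs), ← lintegral_indicator hs]
  calc ∫⁻ e, (g * fun e ↦ κ e s) e ∂(ν.map f)
      = ∫⁻ e, ∫⁻ ω, s.indicator (g ∘ f) ω ∂(κ e) ∂(ν.map f) := by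
        refine lintegral_congr_ae ?_
        filter_upwards [hconc] with e he
        exact (lintegral_indicator_comp_of_ae_eq (ae_iff.mpr he) hs g).symm
    _ = ∫⁻ ω, s.indicator (g ∘ f) ω ∂((ν.map f).bind κ) :=
        (Measure.lintegral_bind κ.aemeasurable ((hg.comp hf).indicator hs).aemeasurable).symm
    _ = ∫⁻ ω, s.indicator (g ∘ f) ω ∂ν := by rw [← hdis]

lemma llr_ae_eq_comp_of_rnDeriv_ae_eq {μ ν : Measure Ω} {μ' ν' : Measure E} {f : Ω → E}
    (hμν : μ ≪ ν) (h : μ.rnDeriv ν =ᵐ[ν] μ'.rnDeriv ν' ∘ f) : llr μ ν =ᵐ[μ] llr μ' ν' ∘ f := by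
  filter_upwards [hμν.ae_le h] with ω hω
  simp only [llr_def, hω, Function.comp_apply]

end MeasureTheory

theorem klDiv_map_eq_of_llr_ae_eq_comp {Ω E : Type*} [MeasurableSpace Ω] [MeasurableSpace E]
    {μ ν : Measure Ω} {f : Ω → E} (hf : Measurable f)
    (hμν : μ ≪ ν) (h : llr μ ν =ᵐ[μ] llr (μ.map f) (ν.map f) ∘ f) :
    klDiv (μ.map f) (ν.map f) = klDiv μ ν := by
  have hintegrable : Integrable (llr (μ.map f) (ν.map f)) (μ.map f) ↔ Integrable (llr μ ν) μ := by
    rw [integrable_map_measure (measurable_llr _ _).aestronglyMeasurable hf.aemeasurable]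
    exact integrable_congr h.symm
  have hintegral : ∫ e, llr (μ.map f) (ν.map f) e ∂(μ.map f) = ∫ ω, llr μ ν ω ∂μ := by
    rw [integral_map hf.aemeasurable (measurable_llr _ _).aestronglyMeasurable]
    exact integral_congr_ae h.symm
  classical
  rw [klDiv, klDiv, hintegral]
  exact if_congr (and_congr (iff_of_true (hμν.map hf) hμν) hintegrable) rfl rfl

theorem klDiv_map_eq_of_common_disintegration_general
    {Ω E : Type*} [MeasurableSpace Ω]
    [MeasurableSpace E]
    (μ ν : Measure Ω) [IsProbabilityMeasure μ] [IsProbabilityMeasure ν]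
    {f : Ω → E} (hf : Measurable f) (hμν : μ ≪ ν)
    (κμ κν : ProbabilityTheory.Kernel E Ω)
    (hdisμ : μ = (μ.map f).bind κμ)
    (hdisν : ν = (ν.map f).bind κν)
    (hconcν : ∀ᵐ e ∂(ν.map f), κν e (f ⁻¹' {e})ᶜ = 0)
    (hagree : ∀ᵐ e ∂(μ.map f), κμ e = κν e) :
    klDiv (μ.map f) (ν.map f) = klDiv μ ν := by
  set g := (μ.map f).rnDeriv (ν.map f)
  have hg : Measurable g := Measure.measurable_rnDeriv _ _
  have hμ : μ = ν.withDensity (g ∘ f) := calc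
    μ = (μ.map f).bind κμ := hdisμ
    _ = (μ.map f).bind κν := Measure.bind_congr_right hagree
    _ = ((ν.map f).withDensity g).bind κν := by
      rw [Measure.withDensity_rnDeriv_eq _ _ (hμν.map hf)]
    _ = ν.withDensity (g ∘ f) := bind_withDensity_map_eq_withDensity_comp hf hdisν hconcν hg
  have hrn : μ.rnDeriv ν =ᵐ[ν] g ∘ f := hμ ▸ Measure.rnDeriv_withDensity ν (hg.comp hf)
  exact klDiv_map_eq_of_llr_ae_eq_comp hf hμν (llr_ae_eq_comp_of_rnDeriv_ae_eq hμν hrn)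

/-- Equality case in the data processing inequality: if `μ ≪ ν` and `μ`, `ν` admit a
common disintegration kernel along `f` (`f_*μ`-a.e.), then
`KL(f_*μ ‖ f_*ν) = KL(μ ‖ ν)`. -/
theorem klDiv_map_eq_of_common_disintegration
    {Ω E : Type*} [MeasurableSpace Ω] [StandardBorelSpace Ω]
    [MeasurableSpace E] [StandardBorelSpace E]
    (μ ν : Measure Ω) [IsProbabilityMeasure μ] [IsProbabilityMeasure ν]
    {f : Ω → E} (hf : Measurable f) (hμν : μ ≪ ν)
    (κμ κν : ProbabilityTheory.Kernel E Ω)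
    [ProbabilityTheory.IsMarkovKernel κμ] [ProbabilityTheory.IsMarkovKernel κν]
    (hdisμ : μ = (μ.map f).bind κμ)
    (hdisν : ν = (ν.map f).bind κν)
    (hconcμ : ∀ᵐ e ∂(μ.map f), κμ e (f ⁻¹' {e})ᶜ = 0)
    (hconcν : ∀ᵐ e ∂(ν.map f), κν e (f ⁻¹' {e})ᶜ = 0)
    (hagree : ∀ᵐ e ∂(μ.map f), κμ e = κν e) :
    klDiv (μ.map f) (ν.map f) = klDiv μ ν :=
  klDiv_map_eq_of_common_disintegration_general μ ν hf hμν κμ κν hdisμ hdisν hconcν hagree
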